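/- Let X be a fan with vertex v. If K ⊆ X is a nonempty compact connected subset with v ∉ K, then K is either an arc or a singleton. -/

import Mathlib

open Set Filter Topology Metric

noncomputable section

/-- An arc in a topological space: a subset homeomorphic to the closed unit
interval `[0,1]`. -/
def IsArc {X : Type*} [TopologicalSpace X] (A : Set X) : Prop :=
  Nonempty (Set.Icc (0 : ℝ) 1 ≃ₜ A)

/-- `x` is an endpoint of the arc `A`: it is the image of `0` or `1` under some
homeomorphism from `[0,1]` onto `A`. -/
def IsArcEndpoint {X : Type*} [TopologicalSpace X] (A : Set X) (x : X) : Prop :=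
  ∃ e : Set.Icc (0 : ℝ) 1 ≃ₜ A,
    (e ⟨0, by norm_num⟩ : X) = x ∨ (e ⟨1, by norm_num⟩ : X) = x

/-- A point `x` on the frontier of an open set `U` is a piercing point of `U` if
for every open `V ∋ x` and every arc `α` in the space containing `x` with `x` not
an endpoint of `α`, the set `α ∩ V` meets both `U` and the complement of the
closure of `U`. -/
def IsPiercingPoint {X : Type*} [TopologicalSpace X] (U : Set X) (x : X) : Prop :=
  x ∈ frontier U ∧
    ∀ V : Set X, IsOpen V → x ∈ V →
      ∀ α : Set X, IsArc α → x ∈ α → ¬ IsArcEndpoint α x →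
        (α ∩ V ∩ U).Nonempty ∧ (α ∩ V ∩ (closure U)ᶜ).Nonempty

/-- An open set is pierced if every point of its frontier is a piercing point. -/
def IsPierced {X : Type*} [TopologicalSpace X] (U : Set X) : Prop :=
  IsOpen U ∧ ∀ x ∈ frontier U, IsPiercingPoint U x

/-- A space has the Jure property if its topology has a basis of pierced open sets. -/
def HasJureProperty (X : Type*) [TopologicalSpace X] : Prop :=
  ∃ B : Set (Set X), TopologicalSpace.IsTopologicalBasis B ∧ ∀ U ∈ B, IsPierced U

/-- A fence: a compact metric space each of whose connected components is an arc
or a single point. -/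
def IsFenceSpace (X : Type*) [MetricSpace X] : Prop :=
  CompactSpace X ∧
    ∀ x : X, IsArc (connectedComponent x) ∨ connectedComponent x = {x}

/-- `X` is a fan with vertex `v`: a continuum which is the union of a collection
of arcs any two of which meet exactly at `v`, and in which the intersection of
any two subcontinua is connected. -/
def IsFanWithVertex (X : Type*) [MetricSpace X] (v : X) : Prop :=
  Nonempty X ∧ CompactSpace X ∧ ConnectedSpace X ∧
    (∃ 𝓛 : Set (Set X), (∀ L ∈ 𝓛, IsArc L) ∧ ⋃₀ 𝓛 = Set.univ ∧
      ∀ L ∈ 𝓛, ∀ L' ∈ 𝓛, L ≠ L' → L ∩ L' = {v}) ∧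
    ∀ H K : Set X, H.Nonempty → IsCompact H → IsPreconnected H →
      K.Nonempty → IsCompact K → IsPreconnected K → IsPreconnected (H ∩ K)

/-- The Euclidean plane. -/
abbrev Plane : Type := EuclideanSpace ℝ (Fin 2)

/-- The closed annulus `A_{rq}(p)` between the circles of radii `r` and `q`
centered at `p`. -/
def closedAnnulus (p : Plane) (r q : ℝ) : Set Plane :=
  {x | min r q ≤ dist x p ∧ dist x p ≤ max r q}

/-- A fence inside the plane: a compact set each of whose connected components
is an arc or a single point. -/
def IsFenceSet (X : Set Plane) : Prop :=
  IsCompact X ∧ ∀ x ∈ X,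
    IsArc (connectedComponentIn X x) ∨ connectedComponentIn X x = {x}

/-- `β` is a bend at `S_r(p)` terminating at `S_q(p)`: an arc `β ⊆ X` contained
in the closed annulus `A_{rq}(p)`, meeting `S_r(p)`, and meeting `S_q(p)`
exactly in its two endpoints. -/
def IsBendTerminating (X : Set Plane) (p : Plane) (r q : ℝ) (β : Set Plane) : Prop :=
  IsArc β ∧ β ⊆ X ∧ β ⊆ closedAnnulus p r q ∧
    (β ∩ Metric.sphere p r).Nonempty ∧
    β ∩ Metric.sphere p q = {x | IsArcEndpoint β x}

/-- `β` is a bend at `S_r(p)`: a bend terminating at `S_q(p)` for some `q > 0`. -/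
def IsBendAt (X : Set Plane) (p : Plane) (r : ℝ) (β : Set Plane) : Prop :=
  ∃ q > 0, IsBendTerminating X p r q β

/-- The bend `β` (terminating at `S_q(p)`) separates `ϑ` from `∞`: there is an
arc `α ⊆ D_q(p)` meeting `S_q(p)` exactly at the endpoints of `β` such that `ϑ`
lies in a bounded connected component of the complement of `α ∪ β`. -/
def SeparatesFromInfinity (p : Plane) (q : ℝ) (β : Set Plane) (ϑ : Plane) : Prop :=
  ∃ α : Set Plane, IsArc α ∧ α ⊆ Metric.closedBall p q ∧
    α ∩ Metric.sphere p q = {x | IsArcEndpoint β x} ∧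
    ϑ ∉ α ∪ β ∧ Bornology.IsBounded (connectedComponentIn ((α ∪ β)ᶜ) ϑ)

/-- `𝔅_{qrϑ}`: the set of all bends at `S_r(p)` terminating at `S_q(p)` that
separate `ϑ` from `∞`. -/
def Bends (X : Set Plane) (p : Plane) (q r : ℝ) (ϑ : Plane) : Set (Set Plane) :=
  {β | IsBendTerminating X p r q β ∧ SeparatesFromInfinity p q β ϑ}

/-- Topological limit superior of a sequence of sets:
`⋂_N closure (⋃_{n ≥ N} A n)`. -/
def setLimsup {X : Type*} [TopologicalSpace X] (A : ℕ → Set X) : Set X :=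
  ⋂ N : ℕ, closure (⋃ n, ⋃ _ : N ≤ n, A n)

/-- The point `p + q • (cos θ, sin θ)` of the circle `S_q(p)`. -/
def circlePoint (p : Plane) (q θ : ℝ) : Plane :=
  p + (q * Real.cos θ) • EuclideanSpace.single (0 : Fin 2) (1 : ℝ)
    + (q * Real.sin θ) • EuclideanSpace.single (1 : Fin 2) (1 : ℝ)

section Arcs

variable {Y Z : Type*} [TopologicalSpace Y] [TopologicalSpace Z]

theorem IsArc.isCompact {A : Set Y} (hA : IsArc A) : IsCompact A :=
  let ⟨e⟩ := hA
  isCompact_iff_compactSpace.2 e.compactSpace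

theorem IsArc.isConnected {A : Set Y} (hA : IsArc A) : IsConnected A :=
  let ⟨e⟩ := hA
  isConnected_iff_connectedSpace.2 (e.surjective.connectedSpace e.continuous)

theorem IsArc.of_homeomorph {A : Set Y} {B : Set Z} (hA : IsArc A) (h : A ≃ₜ B) : IsArc B :=
  hA.map fun e => e.trans h

theorem IsCompact.isArc_or_subsingleton_of_isPreconnected {T : Set ℝ} (hTc : IsCompact T)
    (hTp : IsPreconnected T) : IsArc T ∨ T.Subsingleton := by
  rcases T.eq_empty_or_nonempty with rfl | hTne
  · exact .inr subsingleton_empty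
  have hT : T = Icc (sInf T) (sSup T) := eq_Icc_of_connected_compact ⟨hTne, hTp⟩ hTc
  rcases lt_or_ge (sInf T) (sSup T) with hlt | hge
  · exact .inl ⟨(iccHomeoI _ _ hlt).symm.trans (.setCongr hT.symm)⟩
  · exact .inr (hT ▸ subsingleton_Icc_of_ge hge)

/-- Through a parametrisation of `L`, the set `K` is homeomorphic to a compact connected
subset of `[0,1]`, i.e. to a point or a closed interval. -/
theorem IsArc.isArc_or_subsingleton_of_subset {L K : Set Y} (hL : IsArc L) (hKL : K ⊆ L)
    (hKc : IsCompact K) (hKp : IsPreconnected K) : IsArc K ∨ K.Subsingleton := by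
  obtain ⟨e⟩ := hL
  have hφ : IsEmbedding ((↑) ∘ e : Icc (0 : ℝ) 1 → Y) :=
    IsEmbedding.subtypeVal.comp e.isEmbedding
  have hφL : range ((↑) ∘ e : Icc (0 : ℝ) 1 → Y) = L := by
    rw [range_comp, e.range_coe, image_univ, Subtype.range_coe]
  let h : ((↑) '' (((↑) ∘ e) ⁻¹' K : Set (Icc (0 : ℝ) 1)) : Set ℝ) ≃ₜ K :=
    (IsEmbedding.subtypeVal.homeomorphImage _).symm.trans
      (hφ.homeomorphOfSubsetRange (hKL.trans hφL.ge))
  have : CompactSpace K := isCompact_iff_compactSpace.1 hKc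
  have : PreconnectedSpace K := isPreconnected_iff_preconnectedSpace.1 hKp
  have hTc := isCompact_iff_compactSpace.2 h.symm.compactSpace
  have hTp := isPreconnected_iff_preconnectedSpace.2
    (h.symm.surjective.denseRange.preconnectedSpace h.symm.continuous)
  refine (hTc.isArc_or_subsingleton_of_isPreconnected hTp).imp (·.of_homeomorph h) fun hT => ?_
  rw [← Set.subsingleton_coe] at hT ⊢
  exact h.symm.injective.subsingleton

end Arcs

theorem eq_empty_of_isPreconnected_insert {X : Type*} [TopologicalSpace X] [T1Space X]
    {v : X} {F : Set X} (h : IsPreconnected (insert v F)) (hF : IsClosed F) (hvF : v ∉ F) :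
    F = ∅ := by
  rcases isPreconnected_iff_subset_of_disjoint_closed.1 h {v} F isClosed_singleton hF
    (insert_eq v F).subset (by simp [hvF]) with hsub | hsub
  · exact eq_empty_of_forall_notMem fun y hy => hvF (hsub (mem_insert_of_mem v hy) ▸ hy)
  · exact absurd (hsub (mem_insert v F)) hvF

/-- Were `K` to meet an arc `L'` of the fan other than the arc `L` through a point of `K`,
the subcontinua `L ∪ K` and `L'` would meet in the disconnected set `{v} ∪ (K ∩ L')`. -/
theorem IsFanWithVertex.exists_isArc_superset {X : Type*} [MetricSpace X] {v : X}
    (hX : IsFanWithVertex X v) {K : Set X} (hKne : K.Nonempty) (hKc : IsCompact K)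
    (hKp : IsPreconnected K) (hvK : v ∉ K) : ∃ L, IsArc L ∧ K ⊆ L := by
  obtain ⟨-, -, -, ⟨𝓛, harc, hcover, hinter⟩, hfan⟩ := hX
  obtain ⟨x, hxK⟩ := hKne
  obtain ⟨L, hL𝓛, hxL⟩ := mem_sUnion.1 (hcover ▸ mem_univ x)
  refine ⟨L, harc L hL𝓛, fun y hyK => ?_⟩
  obtain ⟨L', hL'𝓛, hyL'⟩ := mem_sUnion.1 (hcover ▸ mem_univ y)
  by_contra hyL
  have hLL' : L ∩ L' = {v} := hinter L hL𝓛 L' hL'𝓛 (by rintro rfl; exact hyL hyL')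
  have hL := harc L hL𝓛
  have hL' := harc L' hL'𝓛
  have hconn : IsPreconnected (insert v (K ∩ L')) := by
    have := hfan (L ∪ K) L' ⟨x, .inl hxL⟩ (hL.isCompact.union hKc)
      (hL.isConnected.isPreconnected.union x hxL hxK hKp) hL'.isConnected.nonempty
      hL'.isCompact hL'.isConnected.isPreconnected
    rwa [union_inter_distrib_right, hLL', singleton_union] at this
  have hempty := eq_empty_of_isPreconnected_insert hconn
    (hKc.isClosed.inter hL'.isCompact.isClosed) fun h => hvK h.1
  exact hempty.subset ⟨hyK, hyL'⟩

/-- In a fan with vertex `v`, every subcontinuum missing `v` is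
an arc or a singleton. -/
theorem subcontinuum_missing_vertex_is_arc_or_point (X : Type*) [MetricSpace X]
    (v : X) (hX : IsFanWithVertex X v) (K : Set X) (hKne : K.Nonempty)
    (hKc : IsCompact K) (hKconn : IsPreconnected K) (hvK : v ∉ K) :
    IsArc K ∨ ∃ x : X, K = {x} := by
  obtain ⟨L, hL, hKL⟩ := hX.exists_isArc_superset hKne hKc hKconn hvK
  obtain ⟨x, hx⟩ := hKne
  exact (hL.isArc_or_subsingleton_of_subset hKL hKc hKconn).imp_right
    fun hK => ⟨x, hK.eq_singleton_of_mem hx⟩
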